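/- arXiv:1509.05623 — 9 statements merged into one kernel-verified Lean document; each statement's English description precedes it below -/
import Mathlib

section
/- Let S ⊆ {0,1}^n and let u ∈ {0,1}^n be a vector with 𝟙(u) ≠ ∅. For i ∈ [n] let X_i = {v ∈ S : v_i = 1}. Then u belongs to the closure of S under coordinatewise conjunction and disjunction {∧, ∨} if and only if X_i ≠ ∅ for every i ∈ 𝟙(u) and u = ⋁_{i ∈ 𝟙(u)} ⋀_{v ∈ X_i} v (coordinatewise join of coordinatewise meets). -/
/-- A finitary operation on `D`: an arity `t` together with a function `D^t → D`. -/
abbrev Op (D : Type*) := Σ t : ℕ, (Fin t → D) → D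

/-- The closure of a set `S` of vectors under the coordinatewise application of the
operations in `F`. -/
inductive Cl {D ι : Type*} (F : Set (Op D)) (S : Set (ι → D)) : (ι → D) → Prop
  | base {v : ι → D} : v ∈ S → Cl F S v
  | app {t : ℕ} {f : (Fin t → D) → D} (hf : (⟨t, f⟩ : Op D) ∈ F)
      (vs : Fin t → ι → D) (hvs : ∀ j, Cl F S (vs j)) :
      Cl F S (fun i => f fun j => vs j i)

/-!
Closure under coordinatewise `∧` and `∨` is the sublattice of `{0,1}^n` generated by `S`.
Each set `{w | w i ≤ w j}` and `{w | w i ≤ c}` is a sublattice, so whatever holds for all of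
`S` in this form holds for the whole closure; this gives the necessity of both conditions.
Conversely, in a distributive lattice the generated sublattice consists of finite joins of
finite meets of generators, and the conditions say exactly that `u` is such a join, namely
`⨆ i ∈ 𝟙(u), ⨅ v ∈ X_i, v`.
-/

def latticeOps (D : Type*) [Lattice D] : Set (Op D) :=
  {⟨2, fun x => x 0 ⊓ x 1⟩, ⟨2, fun x => x 0 ⊔ x 1⟩}

section LatticeOps

variable {D ι : Type*} [Lattice D]

theorem cl_latticeOps_iff_mem_latticeClosure {S : Set (ι → D)} {w : ι → D} :
    Cl (latticeOps D) S w ↔ w ∈ latticeClosure S := by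
  constructor
  · intro h
    induction h with
    | base hv => exact subset_latticeClosure hv
    | app hf vs _ ih =>
      obtain ⟨rfl, hf⟩ | ⟨rfl, hf⟩ := hf.imp Sigma.mk.inj_iff.1 Sigma.mk.inj_iff.1 <;> cases hf
      · exact isSublattice_latticeClosure.infClosed (ih 0) (ih 1)
      · exact isSublattice_latticeClosure.supClosed (ih 0) (ih 1)
  · have hsub : IsSublattice {w | Cl (latticeOps D) S w} :=
      ⟨fun a ha b hb => Cl.app (f := fun x => x 0 ⊔ x 1) (Or.inr rfl) ![a, b]
          (Fin.forall_fin_two.2 ⟨ha, hb⟩),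
        fun a ha b hb => Cl.app (f := fun x => x 0 ⊓ x 1) (Or.inl rfl) ![a, b]
          (Fin.forall_fin_two.2 ⟨ha, hb⟩)⟩
    exact fun h => latticeClosure_min (fun v hv => Cl.base hv) hsub h

theorem isSublattice_setOf_apply_le_apply (i j : ι) : IsSublattice {w : ι → D | w i ≤ w j} :=
  ⟨fun _ ha _ hb => sup_le_sup ha hb, fun _ ha _ hb => inf_le_inf ha hb⟩

theorem isSublattice_setOf_apply_le (i : ι) (c : D) : IsSublattice {w : ι → D | w i ≤ c} :=
  ⟨fun _ ha _ hb => sup_le ha hb, fun _ ha _ _ => inf_le_of_left_le ha⟩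

end LatticeOps

section CompleteLattice

variable {α κ : Type*} [CompleteLattice α] {s : Set κ} {t : Set α} {f : κ → α}

theorem Set.Finite.biSup_mem_supClosure (hs : s.Finite) (hne : s.Nonempty)
    (hf : ∀ k ∈ s, f k ∈ t) : ⨆ k ∈ s, f k ∈ supClosure t := by
  have hne' : hs.toFinset.Nonempty := hs.toFinset_nonempty.2 hne
  have h := finsetSup'_mem_supClosure hne' fun k hk => hf k (hs.mem_toFinset.1 hk)
  simpa only [Finset.sup'_eq_sup, Finset.sup_eq_iSup, Set.Finite.mem_toFinset] using h

theorem Set.Finite.biInf_mem_infClosure (hs : s.Finite) (hne : s.Nonempty)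
    (hf : ∀ k ∈ s, f k ∈ t) : ⨅ k ∈ s, f k ∈ infClosure t := by
  have hne' : hs.toFinset.Nonempty := hs.toFinset_nonempty.2 hne
  have h := finsetInf'_mem_infClosure hne' fun k hk => hf k (hs.mem_toFinset.1 hk)
  simpa only [Finset.inf'_eq_inf, Finset.inf_eq_iInf, Set.Finite.mem_toFinset] using h

end CompleteLattice

section Bool

variable {ι κ : Type*}

theorem biSup_apply_eq_true {s : Set κ} {f : κ → ι → Bool} {j : ι} :
    (⨆ k ∈ s, f k) j = true ↔ ∃ k ∈ s, f k j = true := by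
  simp only [iSup_apply, ← Bool.not_eq_false, ← bot_eq_false, iSup₂_eq_bot]
  simp

theorem biInf_apply_eq_true {s : Set κ} {f : κ → ι → Bool} {j : ι} :
    (⨅ k ∈ s, f k) j = true ↔ ∀ k ∈ s, f k j = true := by
  simp only [iInf_apply, ← top_eq_true, iInf₂_eq_top]

variable {S : Set (ι → Bool)} {w : ι → Bool}

theorem exists_mem_apply_eq_true_of_mem_latticeClosure (hw : w ∈ latticeClosure S) {i : ι}
    (hi : w i = true) : ∃ v ∈ S, v i = true := by
  by_contra! hS
  have hS' : S ⊆ {v | v i ≤ false} := fun v hv => (eq_false_of_ne_true (hS v hv)).le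
  exact absurd (latticeClosure_min hS' (isSublattice_setOf_apply_le i false) hw) (by simp [hi])

theorem apply_eq_true_of_mem_latticeClosure (hw : w ∈ latticeClosure S) {i j : ι}
    (hS : ∀ v ∈ S, v i = true → v j = true) (hi : w i = true) : w j = true := by
  have hS' : S ⊆ {v | v i ≤ v j} := fun v hv => Bool.le_iff_imp.2 (hS v hv)
  exact Bool.le_iff_imp.1 (latticeClosure_min hS' (isSublattice_setOf_apply_le_apply i j) hw) hi

end Bool

/-- Characterization of the closure of `S ⊆ {0,1}^n` under `{∧, ∨}`: a vector `u` with
`𝟙(u) ≠ ∅` belongs to the closure iff `X_i = {v ∈ S : v_i = 1}` is nonempty for every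
`i ∈ 𝟙(u)` and `u = ⋁_{i ∈ 𝟙(u)} ⋀_{v ∈ X_i} v`. -/
theorem closure_and_or_iff {n : ℕ} (S : Set (Fin n → Bool)) (u : Fin n → Bool)
    (hu : ∃ i, u i = true) :
    Cl {(⟨2, fun x => x 0 && x 1⟩ : Op Bool), (⟨2, fun x => x 0 || x 1⟩ : Op Bool)} S u ↔
      ((∀ i, u i = true → {v ∈ S | v i = true}.Nonempty) ∧
        ∀ j, (u j = true ↔ ∃ i, u i = true ∧ ∀ v ∈ {v ∈ S | v i = true}, v j = true)) := by
  change Cl (latticeOps Bool) S u ↔ _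
  rw [cl_latticeOps_iff_mem_latticeClosure]
  constructor
  · intro h
    refine ⟨fun i hi => exists_mem_apply_eq_true_of_mem_latticeClosure h hi, fun j => ?_⟩
    exact ⟨fun hj => ⟨j, hj, fun v hv => hv.2⟩, fun ⟨i, hi, hij⟩ =>
      apply_eq_true_of_mem_latticeClosure h (fun v hv hvi => hij v ⟨hv, hvi⟩) hi⟩
  · rintro ⟨hne, hchar⟩
    have hu_eq : u = ⨆ i ∈ {i | u i = true}, ⨅ v ∈ {v ∈ S | v i = true}, v := by
      ext j
      rw [Bool.eq_iff_iff, hchar j, biSup_apply_eq_true]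
      simp only [biInf_apply_eq_true]
      rfl
    rw [hu_eq, ← supClosure_infClosure]
    exact (Set.toFinite _).biSup_mem_supClosure hu fun i hi =>
      (Set.toFinite _).biInf_mem_infClosure (hne i hi) fun v hv => hv.1
end

section
/- Let n ≥ 2, let S ⊆ {0,1}^n, and let maj be the ternary boolean majority operation. A vector v ∈ {0,1}^n belongs to Cl_{maj}(S) if and only if for all i, j ∈ [n] with i ≠ j there exists x ∈ S such that x_i = v_i and x_j = v_j. -/
lemma maj_pigeon : ∀ g h : Fin 3 → Bool, ∃ k : Fin 3,
    g k = ((g 0 && g 1) || (g 1 && g 2) || (g 0 && g 2)) ∧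
    h k = ((h 0 && h 1) || (h 1 && h 2) || (h 0 && h 2)) := by decide

lemma maj_two : ∀ x y z b : Bool,
    ((x = b ∧ y = b) ∨ (y = b ∧ z = b) ∨ (x = b ∧ z = b)) →
    ((x && y) || (y && z) || (x && z)) = b := by decide

/-- Characterization of the closure of `S ⊆ {0,1}^n` (`n ≥ 2`) under the ternary boolean
majority operation: `v ∈ Cl_maj(S)` iff every pair of coordinates of `v` is realized by
some vector of `S`. -/
theorem closure_maj_iff {n : ℕ} (hn : 2 ≤ n) (S : Set (Fin n → Bool)) (v : Fin n → Bool) :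
    Cl {(⟨3, fun x => (x 0 && x 1) || (x 1 && x 2) || (x 0 && x 2)⟩ : Op Bool)} S v ↔
      ∀ i j : Fin n, i ≠ j → ∃ x ∈ S, x i = v i ∧ x j = v j := by
  set F : Set (Op Bool) :=
    {(⟨3, fun x => (x 0 && x 1) || (x 1 && x 2) || (x 0 && x 2)⟩ : Op Bool)} with hF
  constructor
  · intro h
    induction h with
    | base hv => exact fun i j _ => ⟨_, hv, rfl, rfl⟩
    | app hf vs hvs ih =>
      rw [hF, Set.mem_singleton_iff] at hf
      obtain ⟨ht, hfe⟩ := Sigma.mk.inj_iff.mp hf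
      subst ht
      have hfe' := eq_of_heq hfe
      subst hfe'
      intro i j hij
      obtain ⟨k, hk1, hk2⟩ := maj_pigeon (fun m => vs m i) (fun m => vs m j)
      obtain ⟨x, hxS, hxi, hxj⟩ := ih k i j hij
      exact ⟨x, hxS, by rw [hxi]; exact hk1, by rw [hxj]; exact hk2⟩
  · intro h
    have key : ∀ m : ℕ, ∀ A : Finset (Fin n), A.card = m + 2 →
        ∃ w, Cl F S w ∧ ∀ i ∈ A, w i = v i := by
      intro m
      induction m using Nat.strong_induction_on with
      | _ m ih =>
        intro A hA
        match m, hA with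
        | 0, hA =>
          obtain ⟨i, j, hij, rfl⟩ := Finset.card_eq_two.mp hA
          obtain ⟨x, hxS, hxi, hxj⟩ := h i j hij
          refine ⟨x, Cl.base hxS, ?_⟩
          intro k hk
          rcases Finset.mem_insert.mp hk with rfl | hk
          · exact hxi
          · rw [Finset.mem_singleton.mp hk]; exact hxj
        | (m+1), hA =>
          have h3 : 1 < A.card := by omega
          obtain ⟨a, ha, b, hb, hab⟩ := Finset.one_lt_card.mp h3
          have hbe : b ∈ A.erase a := Finset.mem_erase.mpr ⟨fun hh => hab hh.symm, hb⟩
          have hcae : (A.erase a).card = m + 2 := by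
            rw [Finset.card_erase_of_mem ha, hA]; omega
          have h3' : 0 < ((A.erase a).erase b).card := by
            rw [Finset.card_erase_of_mem hbe, hcae]; omega
          obtain ⟨c, hc⟩ := Finset.card_pos.mp h3'
          have hcb : c ≠ b := (Finset.mem_erase.mp hc).1
          have hca : c ≠ a := (Finset.mem_erase.mp (Finset.mem_erase.mp hc).2).1
          have hcA : c ∈ A := Finset.mem_of_mem_erase (Finset.mem_of_mem_erase hc)
          have hcbe : (A.erase b).card = m + 2 := by
            rw [Finset.card_erase_of_mem hb, hA]; omega
          have hcce : (A.erase c).card = m + 2 := by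
            rw [Finset.card_erase_of_mem hcA, hA]; omega
          obtain ⟨w1, hw1, hw1a⟩ := ih m (Nat.lt_succ_self m) (A.erase a) hcae
          obtain ⟨w2, hw2, hw2a⟩ := ih m (Nat.lt_succ_self m) (A.erase b) hcbe
          obtain ⟨w3, hw3, hw3a⟩ := ih m (Nat.lt_succ_self m) (A.erase c) hcce
          refine ⟨fun i => ((w1 i && w2 i) || (w2 i && w3 i) || (w1 i && w3 i)), ?_, ?_⟩
          · have happ := Cl.app (D := Bool) (ι := Fin n) (S := S) (F := F)
              (f := fun x => (x 0 && x 1) || (x 1 && x 2) || (x 0 && x 2)) rfl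
              ![w1, w2, w3] (fun j => by fin_cases j <;> [exact hw1; exact hw2; exact hw3])
            have heq : (fun i => ((w1 i && w2 i) || (w2 i && w3 i) || (w1 i && w3 i))) =
                (fun i => (fun x : Fin 3 → Bool => (x 0 && x 1) || (x 1 && x 2) || (x 0 && x 2))
                  fun j => ![w1, w2, w3] j i) := by
              funext i
              simp [Matrix.cons_val_zero, Matrix.cons_val_one, Matrix.head_cons]
            rw [heq]; exact happ
          · intro i hi
            apply maj_two
            by_cases hia : i = a
            · subst hia
              exact Or.inr (Or.inl ⟨hw2a i (Finset.mem_erase.mpr ⟨fun hh => hab hh, hi⟩),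
                hw3a i (Finset.mem_erase.mpr ⟨fun hh => hca hh.symm, hi⟩)⟩)
            · by_cases hib : i = b
              · subst hib
                exact Or.inr (Or.inr ⟨hw1a i (Finset.mem_erase.mpr ⟨hia, hi⟩),
                  hw3a i (Finset.mem_erase.mpr ⟨fun hh => hcb hh.symm, hi⟩)⟩)
              · exact Or.inl ⟨hw1a i (Finset.mem_erase.mpr ⟨hia, hi⟩),
                  hw2a i (Finset.mem_erase.mpr ⟨hib, hi⟩)⟩
    obtain ⟨w, hw, hwa⟩ := key (n - 2) Finset.univ (by simp only [Finset.card_univ, Fintype.card_fin]; omega)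
    have : v = w := funext fun i => (hwa i (Finset.mem_univ i)).symm
    rw [this]
    exact hw
end

section
/- (Baker–Pixley, adapted.) Let D be a finite set, let k ≥ 3, and let F be a set of finitary operations on D containing a near-unanimity operation of arity k. Let n ≥ k−1, S ⊆ D^n and v ∈ D^n. Then v ∈ Cl_F(S) if and only if for every set of indices I ⊆ [n] with |I| = k−1, the restriction v_I belongs to Cl_F(S_I). -/
/-!
Restriction to the coordinates in `I` maps `Cl_F(S)` onto `Cl_F(S_I)`, which gives one direction
and lets every member of `Cl_F(S_I)` be lifted back to `Cl_F(S)`. Conversely one shows by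
induction on `|I| ≥ k - 1` that `v_I ∈ Cl_F(S_I)`: for `|I| ≥ k`, pick distinct `i₁, …, i_k ∈ I`
and lift `v_{I ∖ {i_j}}` to some `w_j ∈ Cl_F(S_I)` agreeing with `v` off `i_j`. At every
coordinate at most one of `w_1, …, w_k` differs from `v`, so the near-unanimity operation
applied to them returns `v_I`.
-/

open Finset

def IsNearUnanimity {D : Type*} {k : ℕ} (f : (Fin k → D) → D) : Prop :=
  ∀ (x : D) (xs : Fin k → D) (j : Fin k), (∀ i, i ≠ j → xs i = x) → f xs = x

namespace Cl

variable {D ι κ : Type*} {F : Set (Op D)} {S : Set (ι → D)}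

theorem comp {v : ι → D} (h : Cl F S v) (e : κ → ι) : Cl F ((· ∘ e) '' S) (v ∘ e) := by
  induction h with
  | base hv => exact base ⟨_, hv, rfl⟩
  | app hf vs _ ih => exact app hf (fun j => vs j ∘ e) ih

theorem exists_comp_eq (e : κ → ι) {u : κ → D} (h : Cl F ((· ∘ e) '' S) u) :
    ∃ w, Cl F S w ∧ w ∘ e = u := by
  induction h with
  | base hu =>
    obtain ⟨w, hw, rfl⟩ := hu
    exact ⟨w, base hw, rfl⟩
  | @app t g hg vs _ ih =>
    choose ws hws hres using ih
    refine ⟨fun i => g fun j => ws j i, app hg ws hws, funext fun x => ?_⟩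
    exact congrArg g (funext fun j => congrFun (hres j) x)

theorem of_nearUnanimity {k : ℕ} (hk : 0 < k) {f : (Fin k → D) → D}
    (hfF : (⟨k, f⟩ : Op D) ∈ F) (hf : IsNearUnanimity f) (g : Fin k ↪ ι) {v : ι → D}
    (hw : ∀ j, ∃ w, Cl F S w ∧ ∀ i, i ≠ g j → w i = v i) : Cl F S v := by
  choose w hwCl hwv using hw
  convert app hfF w hwCl using 1
  funext i
  by_cases hi : ∃ j₀, g j₀ = i
  · obtain ⟨j₀, rfl⟩ := hi
    exact (hf _ _ j₀ fun j hj => hwv j _ (g.injective.ne hj.symm)).symm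
  · rw [not_exists] at hi
    exact (hf _ _ ⟨0, hk⟩ fun j _ => hwv j i (Ne.symm (hi j))).symm

variable [DecidableEq ι]

theorem restrict_of_restrict_erase {k : ℕ} (hk : 0 < k) {f : (Fin k → D) → D}
    (hfF : (⟨k, f⟩ : Op D) ∈ F) (hf : IsNearUnanimity f) {v : ι → D} {I : Finset ι}
    (hI : k ≤ #I)
    (h : ∀ i ∈ I, Cl F ((fun w => fun x : I.erase i => w x.1) '' S) (fun x : I.erase i => v x.1)) :
    Cl F ((fun w => fun x : I => w x.1) '' S) (fun x : I => v x.1) := by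
  obtain ⟨g⟩ : Nonempty (Fin k ↪ I) :=
    Function.Embedding.nonempty_of_card_le (by simpa using hI)
  refine of_nearUnanimity hk hfF hf g fun j => ?_
  let e : I.erase (g j) → I := fun x => ⟨x.1, mem_of_mem_erase x.2⟩
  have hS : (fun w => fun x : I.erase (g j) => w x.1) '' S
      = (· ∘ e) '' ((fun w => fun x : I => w x.1) '' S) := by
    rw [Set.image_image]; rfl
  have hv := h (g j) (g j).2
  rw [hS] at hv
  obtain ⟨w, hwCl, hwv⟩ := exists_comp_eq e hv
  refine ⟨w, hwCl, fun x hx => congrFun hwv ⟨x.1, mem_erase.2 ⟨?_, x.2⟩⟩⟩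
  exact fun hx' => hx (Subtype.ext hx')

theorem restrict_of_forall_card_eq {k : ℕ} (hk : 0 < k) {f : (Fin k → D) → D}
    (hfF : (⟨k, f⟩ : Op D) ∈ F) (hf : IsNearUnanimity f) {v : ι → D}
    (h : ∀ I : Finset ι, #I = k - 1 →
      Cl F ((fun w => fun x : I => w x.1) '' S) (fun x : I => v x.1))
    (I : Finset ι) (hI : k - 1 ≤ #I) :
    Cl F ((fun w => fun x : I => w x.1) '' S) (fun x : I => v x.1) := by
  induction I using Finset.strongInduction with
  | H I ih =>
    by_cases hIk : #I = k - 1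
    · exact h I hIk
    refine restrict_of_restrict_erase hk hfF hf (by omega) fun i hi => ?_
    refine ih _ (erase_ssubset hi) ?_
    rw [card_erase_of_mem hi]
    omega

end Cl

theorem baker_pixley_general {D : Type*} {k : ℕ} (hk : 3 ≤ k) (F : Set (Op D))
    (f : (Fin k → D) → D) (hfF : (⟨k, f⟩ : Op D) ∈ F)
    (hnu : ∀ (x : D) (xs : Fin k → D) (j : Fin k), (∀ i, i ≠ j → xs i = x) → f xs = x)
    {n : ℕ} (hn : k - 1 ≤ n) (S : Set (Fin n → D)) (v : Fin n → D) :
    Cl F S v ↔ ∀ I : Finset (Fin n), I.card = k - 1 →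
      Cl F ((fun w => fun i : I => w i.1) '' S) (fun i : I => v i.1) := by
  refine ⟨fun h I _ => h.comp Subtype.val, fun h => ?_⟩
  have huniv := Cl.restrict_of_forall_card_eq (by omega) hfF hnu h univ (by simpa using hn)
  let e : Fin n → (univ : Finset (Fin n)) := fun i => ⟨i, mem_univ i⟩
  have hS : (· ∘ e) '' ((fun w => fun i : (univ : Finset (Fin n)) => w i.1) '' S) = S := by
    rw [Set.image_image]
    exact Set.image_id S
  have hv := huniv.comp e
  rwa [hS] at hv

/-- Baker–Pixley: if `F` contains a near-unanimity operation of arity `k ≥ 3` over a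
finite domain `D`, then `v ∈ Cl_F(S)` iff `v_I ∈ Cl_F(S_I)` for every index set `I` of
size `k - 1`. -/
theorem baker_pixley {D : Type*} [Finite D] {k : ℕ} (hk : 3 ≤ k) (F : Set (Op D))
    (f : (Fin k → D) → D) (hfF : (⟨k, f⟩ : Op D) ∈ F)
    (hnu : ∀ (x : D) (xs : Fin k → D) (j : Fin k), (∀ i, i ≠ j → xs i = x) → f xs = x)
    {n : ℕ} (hn : k - 1 ≤ n) (S : Set (Fin n → D)) (v : Fin n → D) :
    Cl F S v ↔ ∀ I : Finset (Fin n), I.card = k - 1 →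
      Cl F ((fun w => fun i : I => w i.1) '' S) (fun i : I => v i.1) :=
  baker_pixley_general hk F f hfF hnu hn S v
end

section
/- Let k ≥ 3 and n ≥ k, let 𝓔 be a family of subsets of [n], and let S = {χ_{[n]\E} : E ∈ 𝓔} ⊆ {0,1}^n be the set of characteristic vectors of the complements of the hyperedges. Then there exists a hitting set X ⊆ [n] of size k (i.e., |X| = k and X ∩ E ≠ ∅ for every E ∈ 𝓔) if and only if the all-ones vector 𝟙 does not belong to Cl_{Th_k^{k+1}}(S). -/
/-!
If `X` is a hitting set of size `k`, every generator vanishes somewhere on `X`, and this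
property survives `Th_k^{k+1}`: the `k + 1` arguments vanish at points of `X`, two of them at
the same point by pigeonhole, and there the threshold sees only `k - 1` ones. Conversely, if no
`k`-set is a hitting set, every `k`-set is disjoint from some hyperedge, so some generator is `1`
on it; by induction on `|Y|`, some vector of the closure is `1` on any `Y` with `|Y| ≥ k`: apply
`Th_k^{k+1}` to vectors that are `1` on `Y` minus one of `k + 1` distinct points `y_j`, so each
coordinate in `Y` sees at most one `0`. Taking `Y = [n]` gives `𝟙`.
-/

open Finset

def threshold (k : ℕ) (x : Fin (k + 1) → Bool) : Bool :=
  decide (k ≤ (univ.filter fun i => x i = true).card)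

abbrev thresholdOp (k : ℕ) : Op Bool := ⟨k + 1, threshold k⟩

theorem threshold_eq_true_iff {k : ℕ} (x : Fin (k + 1) → Bool) :
    threshold k x = true ↔ ∀ j₁ j₂, x j₁ = false → x j₂ = false → j₁ = j₂ := by
  have hsum := card_filter_add_card_filter_not (s := univ) (p := fun j => x j = true)
  simp only [card_univ, Fintype.card_fin, Bool.not_eq_true] at hsum
  rw [threshold, decide_eq_true_iff]
  calc k ≤ (univ.filter fun j => x j = true).card
      ↔ (univ.filter fun j => x j = false).card ≤ 1 := by omega
    _ ↔ _ := by
      simp only [card_le_one, mem_filter, mem_univ, true_and]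
      exact ⟨fun h j₁ j₂ h₁ h₂ => h j₁ h₁ j₂ h₂, fun h j₁ h₁ j₂ h₂ => h j₁ j₂ h₁ h₂⟩

namespace Cl

variable {ι : Type*}

theorem singleton_induction {D : Type*} {t : ℕ} {f : (Fin t → D) → D} {S : Set (ι → D)}
    {P : (ι → D) → Prop} (base : ∀ v ∈ S, P v)
    (app : ∀ vs : Fin t → ι → D, (∀ j, P (vs j)) → P fun i => f fun j => vs j i)
    {v : ι → D} (hv : Cl {⟨t, f⟩} S v) : P v := by
  induction hv with
  | base hv => exact base _ hv
  | app hf vs _ ih =>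
    obtain ⟨rfl, hf⟩ := Sigma.mk.inj_iff.mp hf
    cases hf
    exact app vs ih

theorem exists_false_mem {k : ℕ} {S : Set (ι → Bool)} {X : Finset ι} (hX : X.card ≤ k)
    (hS : ∀ v ∈ S, ∃ i ∈ X, v i = false) {v : ι → Bool} (hv : Cl {thresholdOp k} S v) :
    ∃ i ∈ X, v i = false := by
  refine singleton_induction hS (fun vs ih => ?_) hv
  choose c hcX hc using ih
  obtain ⟨j₁, j₂, hne, hc₁₂⟩ := Fintype.exists_ne_map_eq_of_card_lt
    (fun j => (⟨c j, hcX j⟩ : X)) (by simpa using Nat.lt_succ_of_le hX)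
  have hc₂ : vs j₂ (c j₁) = false := by
    rw [show c j₁ = c j₂ from congrArg Subtype.val hc₁₂]
    exact hc j₂
  refine ⟨c j₁, hcX j₁, Bool.eq_false_iff.mpr fun htrue => hne ?_⟩
  exact (threshold_eq_true_iff _).mp htrue j₁ j₂ (hc j₁) hc₂

theorem exists_forall_true_of_card_le [DecidableEq ι] {k : ℕ} {S : Set (ι → Bool)}
    (hS : ∀ Y : Finset ι, Y.card = k → ∃ v ∈ S, ∀ i ∈ Y, v i = true)
    (Y : Finset ι) (hY : k ≤ Y.card) :
    ∃ v, Cl {thresholdOp k} S v ∧ ∀ i ∈ Y, v i = true := by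
  induction Y using Finset.strongInduction with
  | H Y ih =>
  rcases hY.eq_or_lt with hY | hY
  · obtain ⟨v, hv, hvY⟩ := hS Y hY.symm
    exact ⟨v, base hv, hvY⟩
  let y : Fin (k + 1) ↪ Y := (Fin.castLEEmb hY).trans Y.equivFin.symm.toEmbedding
  have hcard : ∀ j, k ≤ (Y.erase (y j)).card := fun j => by
    rw [card_erase_of_mem (y j).2]; omega
  choose vs hvs hvsY using fun j => ih _ (erase_ssubset (y j).2) (hcard j)
  refine ⟨_, app (Set.mem_singleton _) vs hvs, fun i hi => (threshold_eq_true_iff _).mpr ?_⟩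
  have hy : ∀ j, vs j i = false → i = y j := fun j hj => by
    by_contra hne
    simp [hvsY j i (mem_erase.mpr ⟨hne, hi⟩)] at hj
  exact fun j₁ j₂ h₁ h₂ => y.injective (Subtype.ext ((hy j₁ h₁).symm.trans (hy j₂ h₂)))

end Cl

theorem hitting_set_iff_not_closure_threshold_general {k n : ℕ} (hn : k ≤ n)
    (E : Set (Finset (Fin n))) :
    (∃ X : Finset (Fin n), X.card = k ∧ ∀ e ∈ E, (X ∩ e).Nonempty) ↔
      ¬ Cl {(⟨k + 1, fun x => decide (k ≤ (Finset.univ.filter fun i => x i = true).card)⟩ :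
              Op Bool)}
          {v | ∃ e ∈ E, v = fun i => decide (i ∉ e)} (fun _ => true) := by
  constructor
  · rintro ⟨X, hXcard, hXhit⟩ hCl
    refine absurd (Cl.exists_false_mem (k := k) hXcard.le ?_ hCl) (by simp)
    rintro _ ⟨e, he, rfl⟩
    obtain ⟨i, hi⟩ := hXhit e he
    exact ⟨i, (mem_inter.mp hi).1, by simp [(mem_inter.mp hi).2]⟩
  · intro hCl
    by_contra! hX
    refine hCl ?_
    have hS : ∀ Y : Finset (Fin n), Y.card = k →
        ∃ v ∈ {v | ∃ e ∈ E, v = fun i => decide (i ∉ e)}, ∀ i ∈ Y, v i = true := by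
      intro Y hY
      obtain ⟨e, he, hdisj⟩ := hX Y hY
      have hdisj : Disjoint Y e := disjoint_iff_inter_eq_empty.mpr hdisj
      exact ⟨_, ⟨e, he, rfl⟩, fun i hi => by simpa using disjoint_left.mp hdisj hi⟩
    obtain ⟨v, hv, hv_true⟩ := Cl.exists_forall_true_of_card_le hS univ (by simpa using hn)
    exact funext (fun i => hv_true i (mem_univ i)) ▸ hv

/-- Reduction from Hitting Set: for `k ≥ 3` and `n ≥ k`, a hypergraph `𝓔` on `[n]` has a
hitting set of size `k` iff the all-ones vector does not belong to the closure under the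
threshold operation `Th_k^{k+1}` of the characteristic vectors of the complements of the
hyperedges. -/
theorem hitting_set_iff_not_closure_threshold {k n : ℕ} (hk : 3 ≤ k) (hn : k ≤ n)
    (E : Set (Finset (Fin n))) :
    (∃ X : Finset (Fin n), X.card = k ∧ ∀ e ∈ E, (X ∩ e).Nonempty) ↔
      ¬ Cl {(⟨k + 1, fun x => decide (k ≤ (Finset.univ.filter fun i => x i = true).card)⟩ :
              Op Bool)}
          {v | ∃ e ∈ E, v = fun i => decide (i ∉ e)} (fun _ => true) :=
  hitting_set_iff_not_closure_threshold_general hn E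
end

section
/- Let g(x,y,z) = x ∧ (y → z) be the ternary boolean operation (where y → z = ¬y ∨ z), and let S ⊆ {0,1}^n be such that for every i ∈ [n] there exist u, w ∈ S with u_i = 1 and w_i = 0. Then for all indices k, i ∈ [n] with k ≠ i: there exists u ∈ Cl_{g}(S) with (u_k, u_i) = (1,0) if and only if there exists v ∈ S with (v_k, v_i) = (1,0) or (v_k, v_i) = (0,1). -/
lemma cl_eq_coords {D : Type*} {n : ℕ} {F : Set (Op D)} {S : Set (Fin n → D)}
    {k i : Fin n} (hSeq : ∀ v ∈ S, v k = v i) {u : Fin n → D}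
    (hu : Cl F S u) : u k = u i := by
  induction hu with
  | base hv => exact hSeq _ hv
  | app hf vs hvs ih =>
    simp only
    congr 1
    funext j
    exact ih j

/-- For `g(x,y,z) = x ∧ (y → z)` and `S ⊆ {0,1}^n` such that every coordinate takes both
values on `S`: for `k ≠ i`, some `u ∈ Cl_g(S)` has `(u_k, u_i) = (1,0)` iff some `v ∈ S`
has `(v_k, v_i) = (1,0)` or `(v_k, v_i) = (0,1)`. -/
theorem closure_impl_pair_iff {n : ℕ} (S : Set (Fin n → Bool))
    (hS : ∀ i : Fin n, (∃ u ∈ S, u i = true) ∧ (∃ w ∈ S, w i = false)) :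
    ∀ k i : Fin n, k ≠ i →
      ((∃ u, Cl {(⟨3, fun x => x 0 && (!x 1 || x 2)⟩ : Op Bool)} S u ∧
          u k = true ∧ u i = false) ↔
        ∃ v ∈ S, (v k = true ∧ v i = false) ∨ (v k = false ∧ v i = true)) := by
  intro k i hki
  constructor
  · rintro ⟨u, hu, huk, hui⟩
    by_contra hcon
    push_neg at hcon
    have hSeq : ∀ v ∈ S, v k = v i := by
      intro v hv
      have := hcon v hv
      cases h1 : v k <;> cases h2 : v i <;> simp_all
    have := cl_eq_coords hSeq hu
    rw [huk, hui] at this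
    exact Bool.noConfusion this
  · rintro ⟨v, hv, hcase⟩
    rcases hcase with ⟨h1, h2⟩ | ⟨h1, h2⟩
    · exact ⟨v, Cl.base hv, h1, h2⟩
    · obtain ⟨w, hw, hwk⟩ := (hS k).1
      obtain ⟨z, hz, hzi⟩ := (hS i).2
      refine ⟨_, Cl.app (F := {(⟨3, fun x => x 0 && (!x 1 || x 2)⟩ : Op Bool)}) (S := S) rfl ![w, v, z] ?_, ?_, ?_⟩
      · intro j
        fin_cases j <;> exact Cl.base ‹_›
      · simp [h1, hwk]
      · simp [h2, hzi]
end

section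
/- Let g(x,y,z) = x ∧ (y → z) be the ternary boolean operation (where y → z = ¬y ∨ z), and let S ⊆ {0,1}^n be such that for every i ∈ [n] there exist u, w ∈ S with u_i = 1 and w_i = 0. Then a vector v ∈ {0,1}^n belongs to Cl_{g}(S) if and only if (i) there exists w ∈ S with 𝟙(v) ⊆ 𝟙(w), and (ii) for every pair (k, i) ∈ 𝟙(v) × 𝟘(v) there exists w ∈ S with (w_k, w_i) = (0,1) or (w_k, w_i) = (1,0). -/
/-! On `ι → Bool`, `g(a, b, c) = a ⊓ (b ⇨ c)`. Every element of the closure lies below its first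
argument, hence below a member of `S`, and coordinatewise operations preserve every equality
`w k = w i` shared by all of `S`; this gives necessity.

Conversely, `g` yields `a ⊓ b` and, below a fixed `a`, also `a ⊓ (b ⊔ c)`. Take `w ∈ S` above `v`.
For `v k = 1`, `v i = 0`, a vector of `S` separating `k` from `i` gives some `z` in the closure with
`z k = 1`, `z i = 0` (if it separates the wrong way round, use `u ⊓ (w' ⇨ x)` with `u k = 1` and
`x i = 0`). Joining these below `w` over all `k` gives `z_i ≥ v` with `z_i i = 0`, and
`v = w ⊓ ⨅ i, z_i`. -/

abbrev implOp : Op Bool := ⟨3, fun x => x 0 && (!x 1 || x 2)⟩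

namespace Cl

theorem apply_eq_apply {D ι : Type*} {F : Set (Op D)} {S : Set (ι → D)} {k i : ι}
    (hS : ∀ w ∈ S, w k = w i) {v : ι → D} (hv : Cl F S v) : v k = v i := by
  induction hv with
  | base hw => exact hS _ hw
  | app _ vs _ ih => exact congrArg _ (funext ih)

variable {ι : Type*} {S : Set (ι → Bool)} {a b c v : ι → Bool}

theorem himp (ha : Cl {implOp} S a) (hb : Cl {implOp} S b) (hc : Cl {implOp} S c) :
    Cl {implOp} S (a ⊓ (b ⇨ c)) := by
  convert Cl.app (F := {implOp}) (S := S) rfl ![a, b, c]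
    (by simp [Fin.forall_fin_succ, *]) using 1
  funext i
  simp [himp_eq, Bool.or_comm]

@[elab_as_elim]
theorem implOp_induction {P : (ι → Bool) → Prop} (base : ∀ w ∈ S, P w)
    (step : ∀ a b c, P a → P b → P c → P (a ⊓ (b ⇨ c))) (hv : Cl {implOp} S v) : P v := by
  induction hv with
  | base hw => exact base _ hw
  | app hf vs _ ih =>
    obtain ⟨rfl, hf⟩ := Sigma.mk.inj_iff.mp hf
    obtain rfl := eq_of_heq hf
    convert step _ _ _ (ih 0) (ih 1) (ih 2) using 1
    funext i
    simp [himp_eq, Bool.or_comm]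

theorem exists_le (hv : Cl {implOp} S v) : ∃ w ∈ S, v ≤ w :=
  implOp_induction (fun w hw => ⟨w, hw, le_rfl⟩)
    (fun _ _ _ ⟨w, hw, haw⟩ _ _ => ⟨w, hw, inf_le_left.trans haw⟩) hv

theorem inf (ha : Cl {implOp} S a) (hb : Cl {implOp} S b) : Cl {implOp} S (a ⊓ b) :=
  inf_himp a b ▸ ha.himp ha hb

-- `a ⊓ ((a ⊓ (b ⇨ c)) ⇨ c) = a ⊓ (b ⊔ c)`: inside `a`, relative joins are available
theorem inf_sup (ha : Cl {implOp} S a) (hb : Cl {implOp} S b) (hc : Cl {implOp} S c) :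
    Cl {implOp} S (a ⊓ (b ⊔ c)) := by
  convert ha.himp (ha.himp hb hc) hc using 1
  funext i
  simp only [Pi.inf_apply, Pi.sup_apply, Pi.himp_apply]
  cases a i <;> cases b i <;> cases c i <;> decide

theorem inf_finset_inf {κ : Type*} {s : Finset κ} {z : κ → ι → Bool} (hb : Cl {implOp} S b)
    (hz : ∀ j ∈ s, Cl {implOp} S (z j)) : Cl {implOp} S (b ⊓ s.inf z) :=
  Finset.inf_induction (p := fun x => Cl {implOp} S (b ⊓ x)) (by rwa [inf_top_eq])
    (fun x hx y hy => inf_inf_distrib_left b x y ▸ hx.inf hy) fun j hj => hb.inf (hz j hj)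

theorem inf_finset_sup' {κ : Type*} {s : Finset κ} (hs : s.Nonempty) {z : κ → ι → Bool}
    (ha : Cl {implOp} S a) (hz : ∀ j ∈ s, Cl {implOp} S (z j)) :
    Cl {implOp} S (a ⊓ s.sup' hs z) :=
  Finset.sup'_induction hs z (p := fun x => Cl {implOp} S (a ⊓ x))
    (fun x hx y hy => by simpa [inf_sup_left] using ha.inf_sup hx hy) fun j hj => ha.inf (hz j hj)

theorem exists_apply_true_false {k i : ι} {u w x : ι → Bool} (hu : Cl {implOp} S u)
    (huk : u k = true) (hx : Cl {implOp} S x) (hxi : x i = false) (hw : Cl {implOp} S w)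
    (hwki : w k ≠ w i) : ∃ z, Cl {implOp} S z ∧ z k = true ∧ z i = false := by
  have hwi : w i = !w k := Bool.eq_not.mpr hwki.symm
  cases hwk : w k
  · refine ⟨u ⊓ (w ⇨ x), hu.himp hw hx, ?_, ?_⟩ <;>
      simp [himp_eq, huk, hwk, hwi, hxi]
  · exact ⟨w, hw, hwk, by rw [hwi, hwk]; rfl⟩

variable [Fintype ι]

theorem of_forall_exists_le (hb : Cl {implOp} S b) (hvb : v ≤ b)
    (h : ∀ i, ∃ z, Cl {implOp} S z ∧ v ≤ z ∧ z i ≤ v i) : Cl {implOp} S v := by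
  choose z hz hvz hzv using h
  convert inf_finset_inf (s := Finset.univ) hb fun i _ => hz i using 1
  refine le_antisymm (le_inf hvb (Finset.le_inf fun i _ => hvz i)) fun i => ?_
  have hzi : b ⊓ Finset.univ.inf z ≤ z i :=
    inf_le_right.trans (Finset.inf_le (Finset.mem_univ i))
  exact (hzi i).trans (hzv i)

theorem exists_le_apply_eq_false (ha : Cl {implOp} S a) (hva : v ≤ a) (i : ι)
    (h : ∀ k, ∃ z, Cl {implOp} S z ∧ v k ≤ z k ∧ z i = false) :
    ∃ z, Cl {implOp} S z ∧ v ≤ z ∧ z i = false := by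
  choose z hz hvz hzi using h
  have hne : (Finset.univ : Finset ι).Nonempty := ⟨i, Finset.mem_univ i⟩
  refine ⟨a ⊓ Finset.univ.sup' hne z, inf_finset_sup' hne ha fun k _ => hz k,
    le_inf hva fun k => (hvz k).trans (Finset.le_sup' z (Finset.mem_univ k) k), ?_⟩
  simp [Finset.sup'_apply, hzi]

end Cl

/-- Characterization of the closure of `S ⊆ {0,1}^n` under `g(x,y,z) = x ∧ (y → z)`,
when every coordinate takes both values on `S`: `v ∈ Cl_g(S)` iff (i) some `w ∈ S`
satisfies `𝟙(v) ⊆ 𝟙(w)`, and (ii) for every `(k,i) ∈ 𝟙(v) × 𝟘(v)` some `w ∈ S` has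
`(w_k, w_i) = (0,1)` or `(w_k, w_i) = (1,0)`. -/
theorem closure_impl_iff {n : ℕ} (S : Set (Fin n → Bool))
    (hS : ∀ i : Fin n, (∃ u ∈ S, u i = true) ∧ (∃ w ∈ S, w i = false))
    (v : Fin n → Bool) :
    Cl {(⟨3, fun x => x 0 && (!x 1 || x 2)⟩ : Op Bool)} S v ↔
      ((∃ w ∈ S, ∀ i, v i = true → w i = true) ∧
        ∀ k i : Fin n, v k = true → v i = false →
          ∃ w ∈ S, (w k = false ∧ w i = true) ∨ (w k = true ∧ w i = false)) := by
  have separates_iff : ∀ a b : Bool, (a = false ∧ b = true) ∨ (a = true ∧ b = false) ↔ a ≠ b := by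
    decide
  simp only [separates_iff, ← Bool.le_iff_imp, ← Pi.le_def]
  constructor
  · intro hv
    refine ⟨hv.exists_le, fun k i hk hi => ?_⟩
    by_contra! h
    simpa [hk, hi] using hv.apply_eq_apply h
  · rintro ⟨⟨w, hw, hvw⟩, hsep⟩
    refine Cl.of_forall_exists_le (.base hw) hvw fun i => ?_
    cases hvi : v i
    · obtain ⟨x, hx, hxi⟩ := (hS i).2
      have separating (k : Fin n) : ∃ z, Cl {implOp} S z ∧ v k ≤ z k ∧ z i = false := by
        cases hvk : v k
        · exact ⟨x, .base hx, Bool.false_le _, hxi⟩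
        · obtain ⟨u, hu, huk⟩ := (hS k).1
          obtain ⟨w', hw', hw'ki⟩ := hsep k i hvk hvi
          obtain ⟨z, hz, hzk, hzi⟩ :=
            Cl.exists_apply_true_false (.base hu) huk (.base hx) hxi (.base hw') hw'ki
          exact ⟨z, hz, hzk.ge, hzi⟩
      obtain ⟨z, hz, hvz, hzi⟩ := Cl.exists_le_apply_eq_false (.base hw) hvw i separating
      exact ⟨z, hz, hvz, hzi.le⟩
    · exact ⟨w, .base hw, hvw, le_top⟩
end

section
/- Let h(x,y,z) = x ∧ (y ∨ z) be the ternary boolean operation, and let S ⊆ {0,1}^n be such that for every i ∈ [n] there exist u, w ∈ S with u_i = 1 and w_i = 0. Then a vector v ∈ {0,1}^n belongs to Cl_{h}(S) if and only if (i) there exists w ∈ S with 𝟙(v) ⊆ 𝟙(w), and (ii) for every pair (k, i) ∈ 𝟙(v) × 𝟘(v) there exists w ∈ S with (w_k, w_i) = (1,0). -/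
section Lattice

variable {α : Type*}

theorem SupClosed.exists_isGreatest [SemilatticeSup α] {T : Set α} (hT : SupClosed T)
    (hfin : T.Finite) (hne : T.Nonempty) : ∃ g, IsGreatest T g :=
  have hne' : hfin.toFinset.Nonempty := by simpa using hne
  ⟨hfin.toFinset.sup' hne' id, hT.finsetSup'_mem hne' fun _ => hfin.mem_toFinset.mp,
    fun _ hx => Finset.le_sup' id (hfin.mem_toFinset.mpr hx)⟩

theorem InfClosed.exists_isLeast [SemilatticeInf α] {T : Set α} (hT : InfClosed T)
    (hfin : T.Finite) (hne : T.Nonempty) : ∃ l, IsLeast T l :=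
  SupClosed.exists_isGreatest (α := αᵒᵈ) hT hfin hne

end Lattice

namespace Cl

variable {D ι : Type*} {S : Set (ι → D)}

theorem app₃ {F : Set (Op D)} {f : (Fin 3 → D) → D} (hf : (⟨3, f⟩ : Op D) ∈ F)
    {a b c : ι → D} (ha : Cl F S a) (hb : Cl F S b) (hc : Cl F S c) :
    Cl F S fun i => f ![a i, b i, c i] := by
  convert Cl.app hf ![a, b, c] (fun j => by fin_cases j <;> assumption) using 1
  ext i
  congr 1
  ext j
  fin_cases j <;> rfl

theorem singleton_ternary_induction {f : (Fin 3 → D) → D} {P : (ι → D) → Prop}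
    (base : ∀ v ∈ S, P v) (app : ∀ a b c, P a → P b → P c → P fun i => f ![a i, b i, c i])
    {v : ι → D} (hv : Cl {⟨3, f⟩} S v) : P v := by
  induction hv with
  | base hv => exact base _ hv
  | app hf vs _ ih =>
    obtain ⟨rfl, hfeq⟩ := Sigma.mk.inj_iff.mp (Set.mem_singleton_iff.mp hf)
    cases eq_of_heq hfeq
    convert app (vs 0) (vs 1) (vs 2) (ih 0) (ih 1) (ih 2) using 1
    ext i
    congr 1
    ext j
    fin_cases j <;> rfl

end Cl

abbrev andOr : Op Bool := ⟨3, fun x => x 0 && (x 1 || x 2)⟩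

section AndOr

variable {ι : Type*} {S : Set (ι → Bool)}

theorem cl_andOr_inf_sup {a b c : ι → Bool} (ha : Cl {andOr} S a) (hb : Cl {andOr} S b)
    (hc : Cl {andOr} S c) : Cl {andOr} S (a ⊓ (b ⊔ c)) :=
  Cl.app₃ (Set.mem_singleton _) ha hb hc

theorem cl_andOr_induction {P : (ι → Bool) → Prop} (base : ∀ v ∈ S, P v)
    (app : ∀ a b c, P a → P b → P c → P (a ⊓ (b ⊔ c))) {v : ι → Bool} (hv : Cl {andOr} S v) :
    P v :=
  Cl.singleton_ternary_induction base app hv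

theorem infClosed_cl_andOr : InfClosed {u | Cl {andOr} S u} := fun a ha b hb => by
  simpa using cl_andOr_inf_sup ha hb hb

theorem supClosed_cl_andOr_of_le {w : ι → Bool} (hw : Cl {andOr} S w) :
    SupClosed {u | Cl {andOr} S u ∧ u ≤ w} := fun a ⟨ha, haw⟩ b ⟨hb, hbw⟩ => by
  refine ⟨?_, sup_le haw hbw⟩
  simpa [inf_eq_right.mpr (sup_le haw hbw)] using cl_andOr_inf_sup hw ha hb

theorem exists_ge_of_cl_andOr {v : ι → Bool} (hv : Cl {andOr} S v) : ∃ w ∈ S, v ≤ w :=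
  cl_andOr_induction (P := fun v => ∃ w ∈ S, v ≤ w) (fun w hw => ⟨w, hw, le_rfl⟩)
    (fun _ _ _ ⟨w, hw, haw⟩ _ _ => ⟨w, hw, inf_le_left.trans haw⟩) hv

theorem exists_separating_of_cl_andOr {v : ι → Bool} (hv : Cl {andOr} S v) {k i : ι}
    (hk : v k = true) (hi : v i = false) : ∃ w ∈ S, w k = true ∧ w i = false := by
  refine cl_andOr_induction (P := fun v => ∀ {k i}, v k = true → v i = false →
    ∃ w ∈ S, w k = true ∧ w i = false) (fun w hw _ _ hk hi => ⟨w, hw, hk, hi⟩) ?_ hv hk hi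
  intro a b c iha ihb ihc k i hk hi
  change (a k && (b k || c k)) = true at hk
  change (a i && (b i || c i)) = false at hi
  simp only [Bool.and_eq_true, Bool.or_eq_true] at hk
  rcases Bool.and_eq_false_iff.mp hi with hai | hbci
  · exact iha hk.1 hai
  · obtain ⟨hbi, hci⟩ := Bool.or_eq_false_iff.mp hbci
    exact hk.2.elim (ihb · hbi) (ihc · hci)

variable [Finite ι]

theorem exists_cl_andOr_ge_of_separated {v w₀ : ι → Bool} (hw₀ : w₀ ∈ S) (hv : v ≤ w₀) {i : ι}
    (hSi : ∃ w ∈ S, w i = false)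
    (hsep : ∀ k, v k = true → ∃ w ∈ S, w k = true ∧ w i = false) :
    ∃ u, Cl {andOr} S u ∧ v ≤ u ∧ u i = false := by
  set T := {u | Cl {andOr} S u ∧ u ≤ w₀} ∩ {u | u i = false}
  have hT : SupClosed T := (supClosed_cl_andOr_of_le (.base hw₀)).inter
    fun a (ha : a i = false) b (hb : b i = false) => show (a ⊔ b) i = false by simp [ha, hb]
  have below_mem {w : ι → Bool} (hw : w ∈ S) (hwi : w i = false) : w₀ ⊓ w ∈ T :=
    ⟨⟨infClosed_cl_andOr (Cl.base hw₀) (Cl.base hw), inf_le_left⟩, by simp [hwi]⟩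
  obtain ⟨w, hw, hwi⟩ := hSi
  obtain ⟨g, ⟨⟨hg, -⟩, hgi⟩, hgT⟩ := hT.exists_isGreatest (Set.toFinite T) ⟨_, below_mem hw hwi⟩
  refine ⟨g, hg, fun k => Bool.le_iff_imp.mpr fun hk => ?_, hgi⟩
  obtain ⟨w', hw', hw'k, hw'i⟩ := hsep k hk
  have hk' : (w₀ ⊓ w') k = true := by simp [Bool.le_iff_imp.mp (hv k) hk, hw'k]
  exact Bool.le_iff_imp.mp (hgT (below_mem hw' hw'i) k) hk'

theorem cl_andOr_of_separated {v w₀ : ι → Bool} (hw₀ : w₀ ∈ S) (hv : v ≤ w₀)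
    (hS : ∀ i, ∃ w ∈ S, w i = false)
    (hsep : ∀ k i, v k = true → v i = false → ∃ w ∈ S, w k = true ∧ w i = false) :
    Cl {andOr} S v := by
  set T := {u | Cl {andOr} S u} ∩ {u | v ≤ u}
  have hT : InfClosed T :=
    infClosed_cl_andOr.inter fun a (ha : v ≤ a) b (hb : v ≤ b) => le_inf ha hb
  obtain ⟨l, ⟨hl, hvl⟩, hlT⟩ := hT.exists_isLeast (Set.toFinite T) ⟨w₀, .base hw₀, hv⟩
  suffices l ≤ v from le_antisymm this hvl ▸ hl
  intro j
  cases hvj : v j with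
  | true => exact le_top
  | false =>
    obtain ⟨u, hu, hvu, huj⟩ :=
      exists_cl_andOr_ge_of_separated hw₀ hv (hS j) fun k hk => hsep k j hk hvj
    simpa [huj] using hlT ⟨hu, hvu⟩ j

end AndOr

/-- Characterization of the closure of `S ⊆ {0,1}^n` under `h(x,y,z) = x ∧ (y ∨ z)`,
when every coordinate takes both values on `S`: `v ∈ Cl_h(S)` iff (i) some `w ∈ S`
satisfies `𝟙(v) ⊆ 𝟙(w)`, and (ii) for every `(k,i) ∈ 𝟙(v) × 𝟘(v)` some `w ∈ S` has
`(w_k, w_i) = (1,0)`. -/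
theorem closure_and_or_ternary_iff {n : ℕ} (S : Set (Fin n → Bool))
    (hS : ∀ i : Fin n, (∃ u ∈ S, u i = true) ∧ (∃ w ∈ S, w i = false))
    (v : Fin n → Bool) :
    Cl {(⟨3, fun x => x 0 && (x 1 || x 2)⟩ : Op Bool)} S v ↔
      ((∃ w ∈ S, ∀ i, v i = true → w i = true) ∧
        ∀ k i : Fin n, v k = true → v i = false →
          ∃ w ∈ S, w k = true ∧ w i = false) := by
  constructor
  · intro hv
    obtain ⟨w, hw, hvw⟩ := exists_ge_of_cl_andOr hv
    exact ⟨⟨w, hw, fun i => Bool.le_iff_imp.mp (hvw i)⟩,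
      fun _ _ => exists_separating_of_cl_andOr hv⟩
  · rintro ⟨⟨w₀, hw₀, hvw₀⟩, hsep⟩
    exact cl_andOr_of_separated hw₀ (fun i => Bool.le_iff_imp.mpr (hvw₀ i)) (fun i => (hS i).2)
      hsep
end

section
/- Let ite(x,y,z) be the ternary boolean operation 'x ? y : z' (returning y if x = 1 and z if x = 0). Let S ⊆ {0,1}^n be such that for every i ∈ [n] there exist u, w ∈ S with u_i = 0 and w_i = 1. Then Cl_{ite}(S) = Cl_{{∨, ¬}}(S), where ∨ is binary coordinatewise disjunction and ¬ is unary coordinatewise negation. -/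
section helpers

variable {D ι : Type*} {F : Set (Op D)} {S : Set (ι → D)}

lemma cl_app1 {f : (Fin 1 → D) → D} (hf : (⟨1, f⟩ : Op D) ∈ F) {a : ι → D}
    (ha : Cl F S a) : Cl F S (fun i => f ![a i]) := by
  have h := Cl.app hf ![a] (by intro j; fin_cases j <;> simpa)
  have e : (fun i => f ![a i]) = fun i => f fun j => (![a]) j i := by
    funext i; congr 1; funext j; fin_cases j <;> rfl
  rw [e]; exact h

lemma cl_app2 {f : (Fin 2 → D) → D} (hf : (⟨2, f⟩ : Op D) ∈ F) {a b : ι → D}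
    (ha : Cl F S a) (hb : Cl F S b) : Cl F S (fun i => f ![a i, b i]) := by
  have h := Cl.app hf ![a, b] (by intro j; fin_cases j <;> simpa)
  have e : (fun i => f ![a i, b i]) = fun i => f fun j => (![a, b]) j i := by
    funext i; congr 1; funext j; fin_cases j <;> rfl
  rw [e]; exact h

lemma cl_app3 {f : (Fin 3 → D) → D} (hf : (⟨3, f⟩ : Op D) ∈ F) {a b c : ι → D}
    (ha : Cl F S a) (hb : Cl F S b) (hc : Cl F S c) :
    Cl F S (fun i => f ![a i, b i, c i]) := by
  have h := Cl.app hf ![a, b, c] (by intro j; fin_cases j <;> simpa)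
  have e : (fun i => f ![a i, b i, c i]) = fun i => f fun j => (![a, b, c]) j i := by
    funext i; congr 1; funext j; fin_cases j <;> rfl
  rw [e]; exact h

lemma cl_nonempty (hF : ∀ g ∈ F, 0 < g.1) {v : ι → D} (h : Cl F S v) : S.Nonempty := by
  induction h with
  | base h => exact ⟨_, h⟩
  | app hf vs hvs ih => exact ih ⟨0, hF _ hf⟩

end helpers

section boolhelpers

variable {ι : Type*} {S : Set (ι → Bool)}

def Fite : Set (Op Bool) := {(⟨3, fun x => cond (x 0) (x 1) (x 2)⟩ : Op Bool)}
def Fon : Set (Op Bool) := {(⟨2, fun x => x 0 || x 1⟩ : Op Bool), (⟨1, fun x => ! x 0⟩ : Op Bool)}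

lemma cl_ite {a b c : ι → Bool} (ha : Cl Fite S a) (hb : Cl Fite S b) (hc : Cl Fite S c) :
    Cl Fite S (fun i => cond (a i) (b i) (c i)) := by
  have := cl_app3 (show (⟨3, fun x => cond (x 0) (x 1) (x 2)⟩ : Op Bool) ∈ Fite from rfl) ha hb hc
  simpa using this

lemma cl_ite_or {a b : ι → Bool} (ha : Cl Fite S a) (hb : Cl Fite S b) :
    Cl Fite S (fun i => a i || b i) := by
  have := cl_ite ha ha hb
  have e : (fun i => cond (a i) (a i) (b i)) = fun i => a i || b i := by
    funext i; cases a i <;> rfl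
  rwa [e] at this

lemma cl_ite_and {a b : ι → Bool} (ha : Cl Fite S a) (hb : Cl Fite S b) :
    Cl Fite S (fun i => a i && b i) := by
  have := cl_ite ha hb ha
  have e : (fun i => cond (a i) (b i) (a i)) = fun i => a i && b i := by
    funext i; cases a i <;> rfl
  rwa [e] at this

lemma cl_on_or {a b : ι → Bool} (ha : Cl Fon S a) (hb : Cl Fon S b) :
    Cl Fon S (fun i => a i || b i) := by
  have := cl_app2 (show (⟨2, fun x => x 0 || x 1⟩ : Op Bool) ∈ Fon from Or.inl rfl) ha hb
  simpa using this

lemma cl_on_not {a : ι → Bool} (ha : Cl Fon S a) : Cl Fon S (fun i => ! a i) := by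
  have := cl_app1 (show (⟨1, fun x => ! x 0⟩ : Op Bool) ∈ Fon from Or.inr rfl) ha
  simpa using this

lemma cl_on_and {a b : ι → Bool} (ha : Cl Fon S a) (hb : Cl Fon S b) :
    Cl Fon S (fun i => a i && b i) := by
  have := cl_on_not (cl_on_or (cl_on_not ha) (cl_on_not hb))
  have e : (fun i => !(!a i || !b i)) = fun i => a i && b i := by
    funext i; cases a i <;> cases b i <;> rfl
  rwa [e] at this

end boolhelpers

/-- If every coordinate takes both values on `S ⊆ {0,1}^n`, then the closure of `S` under
the ternary operation `x ? y : z` equals the closure of `S` under `{∨, ¬}`. -/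
theorem closure_ite_eq_closure_or_not {n : ℕ} (S : Set (Fin n → Bool))
    (hS : ∀ i : Fin n, (∃ u ∈ S, u i = false) ∧ (∃ w ∈ S, w i = true)) :
    {v | Cl {(⟨3, fun x => cond (x 0) (x 1) (x 2)⟩ : Op Bool)} S v} =
      {v | Cl {(⟨2, fun x => x 0 || x 1⟩ : Op Bool), (⟨1, fun x => ! x 0⟩ : Op Bool)} S v} := by
  ext v
  simp only [Set.mem_setOf_eq]
  constructor
  · intro h
    induction h with
    | base h => exact Cl.base h
    | app hf vs hvs ih =>
      simp only [Set.mem_singleton_iff] at hf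
      obtain ⟨rfl, hf⟩ := Sigma.mk.inj_iff.mp hf
      rw [eq_of_heq hf]
      have h1 := cl_on_or (cl_on_and (ih 0) (ih 1)) (cl_on_and (cl_on_not (ih 0)) (ih 2))
      have e : (fun i => (vs 0 i && vs 1 i || (! vs 0 i && vs 2 i)))
          = fun i => cond (vs 0 i) (vs 1 i) (vs 2 i) := by
        funext i; cases vs 0 i <;> simp
      rw [e] at h1
      exact h1
  · intro h
    have hSne : S.Nonempty := by
      refine cl_nonempty ?_ h
      rintro g (rfl | rfl) <;> norm_num
    obtain ⟨u0, hu0⟩ := hSne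
    have hO : ∀ A : Finset (Fin n), ∃ w,
        Cl {(⟨3, fun x => cond (x 0) (x 1) (x 2)⟩ : Op Bool)} S w ∧ ∀ i ∈ A, w i = true := by
      intro A
      induction A using Finset.induction with
      | empty => exact ⟨u0, Cl.base hu0, by simp⟩
      | @insert j A hj ihA =>
        obtain ⟨w, hw, hwA⟩ := ihA
        obtain ⟨z, hz, hzj⟩ := (hS j).2
        refine ⟨fun i => w i || z i, cl_ite_or hw (Cl.base hz), ?_⟩
        intro i hi
        rcases Finset.mem_insert.mp hi with rfl | hi
        · simp [hzj]
        · simp [hwA i hi]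
    have hZ : ∀ A : Finset (Fin n), ∃ w,
        Cl {(⟨3, fun x => cond (x 0) (x 1) (x 2)⟩ : Op Bool)} S w ∧ ∀ i ∈ A, w i = false := by
      intro A
      induction A using Finset.induction with
      | empty => exact ⟨u0, Cl.base hu0, by simp⟩
      | @insert j A hj ihA =>
        obtain ⟨w, hw, hwA⟩ := ihA
        obtain ⟨z, hz, hzj⟩ := (hS j).1
        refine ⟨fun i => w i && z i, cl_ite_and hw (Cl.base hz), ?_⟩
        intro i hi
        rcases Finset.mem_insert.mp hi with rfl | hi
        · simp [hzj]
        · simp [hwA i hi]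
    obtain ⟨O, hOcl, hOtrue⟩ := hO Finset.univ
    obtain ⟨Z, hZcl, hZfalse⟩ := hZ Finset.univ
    induction h with
    | base h => exact Cl.base h
    | app hf vs hvs ih =>
      simp only [Set.mem_insert_iff, Set.mem_singleton_iff] at hf
      rcases hf with hf | hf
      · obtain ⟨rfl, hf⟩ := Sigma.mk.inj_iff.mp hf
        rw [eq_of_heq hf]
        exact cl_ite_or (ih 0) (ih 1)
      · obtain ⟨rfl, hf⟩ := Sigma.mk.inj_iff.mp hf
        rw [eq_of_heq hf]
        have h1 := cl_ite (ih 0) hZcl hOcl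
        have e : (fun i => cond (vs 0 i) (Z i) (O i)) = fun i => ! vs 0 i := by
          funext i
          rw [hZfalse i (Finset.mem_univ i), hOtrue i (Finset.mem_univ i)]
          cases vs 0 i <;> rfl
        rwa [e] at h1
end

section
/- Let S ⊆ {0,1}^n be such that for every i ∈ [n] there exists u ∈ S with u_i = 1. Then Cl_{{∨, +}}(S) = Cl_{{∨, ¬}}(S), where ∨ is binary coordinatewise disjunction, + is binary coordinatewise addition modulo 2 (XOR), and ¬ is unary coordinatewise negation. -/
lemma or_cl {ι : Type*} {F : Set (Op Bool)} {S : Set (ι → Bool)}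
    (hOr : (⟨2, fun x => x 0 || x 1⟩ : Op Bool) ∈ F) {u w : ι → Bool}
    (hu : Cl F S u) (hw : Cl F S w) : Cl F S (fun i => u i || w i) := by
  have := Cl.app hOr ![u, w] (by intro j; fin_cases j <;> assumption)
  simpa using this

lemma not_cl {ι : Type*} {F : Set (Op Bool)} {S : Set (ι → Bool)}
    (hNot : (⟨1, fun x => ! x 0⟩ : Op Bool) ∈ F) {u : ι → Bool}
    (hu : Cl F S u) : Cl F S (fun i => ! u i) := by
  have := Cl.app hNot ![u] (by intro j; fin_cases j <;> assumption)
  simpa using this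

lemma xor_cl {ι : Type*} {F : Set (Op Bool)} {S : Set (ι → Bool)}
    (hXor : (⟨2, fun x => xor (x 0) (x 1)⟩ : Op Bool) ∈ F) {u w : ι → Bool}
    (hu : Cl F S u) (hw : Cl F S w) : Cl F S (fun i => xor (u i) (w i)) := by
  have := Cl.app hXor ![u, w] (by intro j; fin_cases j <;> assumption)
  simpa using this

lemma xor_via {ι : Type*} {F : Set (Op Bool)} {S : Set (ι → Bool)}
    (hOr : (⟨2, fun x => x 0 || x 1⟩ : Op Bool) ∈ F)
    (hNot : (⟨1, fun x => ! x 0⟩ : Op Bool) ∈ F) {u w : ι → Bool}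
    (hu : Cl F S u) (hw : Cl F S w) : Cl F S (fun i => xor (u i) (w i)) := by
  have c := not_cl hNot (or_cl hOr (not_cl hNot hu) hw)
  have d := not_cl hNot (or_cl hOr hu (not_cl hNot hw))
  have e := or_cl hOr c d
  have he : (fun i => xor (u i) (w i)) =
      (fun i => (!((!u i) || w i)) || (!(u i || !w i))) := by
    funext i; cases u i <;> cases w i <;> rfl
  rw [he]; exact e

lemma ones_cl {n : ℕ} {F : Set (Op Bool)} {S : Set (Fin n → Bool)}
    (hOr : (⟨2, fun x => x 0 || x 1⟩ : Op Bool) ∈ F)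
    (hS : ∀ i : Fin n, ∃ u ∈ S, u i = true) (hn : 0 < n) :
    Cl F S (fun _ => true) := by
  choose u hu h1 using hS
  have key : ∀ T : Finset (Fin n), T.Nonempty → Cl F S (T.sup u) := by
    intro T hT
    induction hT using Finset.Nonempty.cons_induction with
    | singleton a => simpa using Cl.base (hu a)
    | cons a T ha hT ih =>
        have h := or_cl hOr (Cl.base (hu a)) ih
        have he : (Finset.cons a T ha).sup u = fun i => u a i || T.sup u i := by
          funext i; simp [Finset.sup_cons, Pi.sup_apply]
        rw [he]; exact h
  have h := key Finset.univ ⟨⟨0, hn⟩, Finset.mem_univ _⟩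
  have he : Finset.univ.sup u = fun _ => true := by
    funext i
    have hle : u i ≤ Finset.univ.sup u := Finset.le_sup (Finset.mem_univ i)
    have h2 := hle i
    rw [h1 i] at h2
    exact le_antisymm (Bool.le_true _) h2
  rw [he] at h; exact h

/-- If every coordinate takes the value `1` on some element of `S ⊆ {0,1}^n`, then the
closure of `S` under `{∨, +}` (disjunction and XOR) equals the closure of `S` under
`{∨, ¬}`. -/
theorem closure_or_xor_eq_closure_or_not {n : ℕ} (S : Set (Fin n → Bool))
    (hS : ∀ i : Fin n, ∃ u ∈ S, u i = true) :
    {v | Cl {(⟨2, fun x => x 0 || x 1⟩ : Op Bool), (⟨2, fun x => xor (x 0) (x 1)⟩ : Op Bool)} S v} =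
      {v | Cl {(⟨2, fun x => x 0 || x 1⟩ : Op Bool), (⟨1, fun x => ! x 0⟩ : Op Bool)} S v} := by
  have hOr1 : (⟨2, fun x => x 0 || x 1⟩ : Op Bool) ∈
      ({⟨2, fun x => x 0 || x 1⟩, ⟨2, fun x => xor (x 0) (x 1)⟩} : Set (Op Bool)) :=
    Set.mem_insert _ _
  have hXor1 : (⟨2, fun x => xor (x 0) (x 1)⟩ : Op Bool) ∈
      ({⟨2, fun x => x 0 || x 1⟩, ⟨2, fun x => xor (x 0) (x 1)⟩} : Set (Op Bool)) :=
    Set.mem_insert_of_mem _ rfl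
  have hOr2 : (⟨2, fun x => x 0 || x 1⟩ : Op Bool) ∈
      ({⟨2, fun x => x 0 || x 1⟩, ⟨1, fun x => ! x 0⟩} : Set (Op Bool)) :=
    Set.mem_insert _ _
  have hNot2 : (⟨1, fun x => ! x 0⟩ : Op Bool) ∈
      ({⟨2, fun x => x 0 || x 1⟩, ⟨1, fun x => ! x 0⟩} : Set (Op Bool)) :=
    Set.mem_insert_of_mem _ rfl
  ext v
  simp only [Set.mem_setOf_eq]
  constructor
  · intro h
    induction h with
    | base h => exact Cl.base h
    | app hf vs hvs ih =>
        rcases hf with h | h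
        · injection h with h1 h2
          subst h1
          rw [eq_of_heq h2]
          exact or_cl hOr2 (ih 0) (ih 1)
        · rw [Set.mem_singleton_iff] at h
          injection h with h1 h2
          subst h1
          rw [eq_of_heq h2]
          exact xor_via hOr2 hNot2 (ih 0) (ih 1)
  · intro h
    induction h with
    | base h => exact Cl.base h
    | app hf vs hvs ih =>
        rcases hf with h | h
        · injection h with h1 h2
          subst h1
          rw [eq_of_heq h2]
          exact or_cl hOr1 (ih 0) (ih 1)
        · rw [Set.mem_singleton_iff] at h
          injection h with h1 h2
          subst h1
          rw [eq_of_heq h2]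
          rcases Nat.eq_zero_or_pos n with hn | hn
          · subst hn
            have he : (fun i : Fin 0 => (fun x : Fin 1 → Bool => ! x 0)
                fun j => vs j i) = vs 0 := funext fun i => i.elim0
            rw [he]; exact ih 0
          · have hones := ones_cl hOr1 hS hn
            have hx := xor_cl hXor1 (ih 0) hones
            simpa using hx
end
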